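/- In Max-Welter, playing from a P-position, every move leads to a non-P-position: if a position (a_1, ..., a_k) satisfies a_k = a_{k-1} + 1 and a_{k-1} + k even, then every position (b_1, ..., b_k) reachable by one move has b_k = a_{k-1}, and b_k - 1 + k is odd, so it does not satisfy the P-position condition. -/
import Mathlib


/-- A move in Max-Welter: the coin on the largest occupied square moves to an
empty square strictly to its left. -/
def MWMove (s t : Finset ℕ) : Prop :=
  ∃ (hs : s.Nonempty) (j : ℕ), j < s.max' hs ∧ j ∉ s ∧
    t = insert j (s.erase (s.max' hs))

theorem MWMove.sum_lt {s t : Finset ℕ} (h : MWMove s t) :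
    t.sum id < s.sum id := by
  obtain ⟨hs, j, hj, hjs, rfl⟩ := h
  have hm : s.max' hs ∈ s := s.max'_mem hs
  have hje : j ∉ s.erase (s.max' hs) := fun hc => hjs (Finset.mem_of_mem_erase hc)
  have h2 : (s.erase (s.max' hs)).sum id + s.max' hs = s.sum id :=
    Finset.sum_erase_add s id hm
  rw [Finset.sum_insert hje]
  simp only [id] at *
  omega

/-- Normal-play Sprague-Grundy value of a Max-Welter position. -/
noncomputable def grundy (s : Finset ℕ) : ℕ :=
  sInf {n : ℕ | ∀ t, ∀ _h : MWMove s t, grundy t ≠ n}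
termination_by s.sum id
decreasing_by exact _h.sum_lt

open Classical in
/-- Misère Sprague-Grundy value: terminal positions get value 1. -/
noncomputable def mgrundy (s : Finset ℕ) : ℕ :=
  if ∀ t, ¬ MWMove s t then 1
  else sInf {n : ℕ | ∀ t, ∀ _h : MWMove s t, mgrundy t ≠ n}
termination_by s.sum id
decreasing_by exact _h.sum_lt

/-- Normal play: `s` is a P-position iff every move leads to a non-P-position. -/
def MWPPos (s : Finset ℕ) : Prop :=
  ∀ t, ∀ _h : MWMove s t, ¬ MWPPos t
termination_by s.sum id
decreasing_by exact _h.sum_lt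

/-- Misère play: the player to move wins iff there is no move (the opponent made
the last move and loses), or some move leads to a position losing for the opponent. -/
def MWMisereWin (s : Finset ℕ) : Prop :=
  (∀ t, ¬ MWMove s t) ∨ ∃ t, ∃ _h : MWMove s t, ¬ MWMisereWin t
termination_by s.sum id
decreasing_by exact _h.sum_lt


/-- every move from a 0-position leads to a non-0-position. -/
theorem maxWelter_move_from_zero_position (k : ℕ) (hk : 2 ≤ k) (a : Fin k → ℕ)
    (ha : StrictMono a)
    (h1 : a ⟨k - 1, by omega⟩ = a ⟨k - 2, by omega⟩ + 1)
    (h2 : Even (a ⟨k - 2, by omega⟩ + k)) :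
    ∀ b : Fin k → ℕ, StrictMono b →
      MWMove (Finset.image a Finset.univ) (Finset.image b Finset.univ) →
      b ⟨k - 1, by omega⟩ = a ⟨k - 2, by omega⟩ ∧
      Odd (b ⟨k - 1, by omega⟩ + k - 1) ∧
      ¬ (b ⟨k - 1, by omega⟩ = b ⟨k - 2, by omega⟩ + 1 ∧
        Even (b ⟨k - 2, by omega⟩ + k)) := by
  intro b hb hmove
  have hk1 : k - 1 < k := by omega
  have hk2 : k - 2 < k := by omega
  obtain ⟨hs, j, hj, hjs, ht⟩ := hmove
  -- max of s is a ⟨k-1⟩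
  have hmaxs : (Finset.image a Finset.univ).max' hs = a ⟨k - 1, hk1⟩ := by
    apply le_antisymm
    · apply Finset.max'_le
      intro y hy
      simp only [Finset.mem_image, Finset.mem_univ, true_and] at hy
      obtain ⟨i, rfl⟩ := hy
      exact ha.monotone (by rw [Fin.le_def]; have := i.isLt; simp; omega)
    · exact Finset.le_max' _ _ (Finset.mem_image_of_mem a (Finset.mem_univ _))
  rw [hmaxs] at hj ht
  have hlt21 : (⟨k - 2, hk2⟩ : Fin k) < ⟨k - 1, hk1⟩ := by
    rw [Fin.lt_def]; simp; omega
  have ha21 : a ⟨k - 2, hk2⟩ < a ⟨k - 1, hk1⟩ := ha hlt21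
  -- j < a ⟨k-2⟩
  have hjlt : j < a ⟨k - 2, hk2⟩ := by
    have hne : j ≠ a ⟨k - 2, hk2⟩ := by
      intro h; exact hjs (h ▸ Finset.mem_image_of_mem a (Finset.mem_univ _))
    omega
  -- max of t is b ⟨k-1⟩
  have htne : (Finset.image b Finset.univ).Nonempty :=
    ⟨b ⟨k - 1, hk1⟩, Finset.mem_image_of_mem b (Finset.mem_univ _)⟩
  have hmaxt : (Finset.image b Finset.univ).max' htne = b ⟨k - 1, hk1⟩ := by
    apply le_antisymm
    · apply Finset.max'_le
      intro y hy
      simp only [Finset.mem_image, Finset.mem_univ, true_and] at hy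
      obtain ⟨i, rfl⟩ := hy
      exact hb.monotone (by rw [Fin.le_def]; have := i.isLt; simp; omega)
    · exact Finset.le_max' _ _ (Finset.mem_image_of_mem b (Finset.mem_univ _))
  -- max of t is also a ⟨k-2⟩
  have hmaxt2 : (Finset.image b Finset.univ).max' htne = a ⟨k - 2, hk2⟩ := by
    apply le_antisymm
    · apply Finset.max'_le
      intro y hy
      rw [ht] at hy
      rcases Finset.mem_insert.mp hy with h | h
      · omega
      · obtain ⟨hne, hmem⟩ := Finset.mem_erase.mp h
        simp only [Finset.mem_image, Finset.mem_univ, true_and] at hmem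
        obtain ⟨i, rfl⟩ := hmem
        have hine : i ≠ ⟨k - 1, hk1⟩ := fun h => hne (by rw [h])
        have : i ≤ (⟨k - 2, hk2⟩ : Fin k) := by
          rw [Fin.le_def]
          have := i.isLt
          have : i.val ≠ k - 1 := fun h => hine (Fin.ext h)
          simp; omega
        exact ha.monotone this
    · apply Finset.le_max'
      rw [ht]
      exact Finset.mem_insert_of_mem (Finset.mem_erase.mpr
        ⟨by omega, Finset.mem_image_of_mem a (Finset.mem_univ _)⟩)
  have hbk : b ⟨k - 1, hk1⟩ = a ⟨k - 2, hk2⟩ := by rw [← hmaxt, hmaxt2]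
  have hblt : b ⟨k - 2, hk2⟩ < b ⟨k - 1, hk1⟩ := hb hlt21
  rw [Nat.even_iff] at h2
  refine ⟨hbk, ?_, ?_⟩
  · rw [Nat.odd_iff, hbk]; omega
  · rintro ⟨hb1, hb2⟩
    rw [Nat.even_iff] at hb2
    omega
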